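/- Let $n$ be a multiple of $4$, $n \geq 4$. Define $L : (\mathbb{Z}/n\mathbb{Z})^2 \to \{C,A,T\}$ by $L(x,y) = A$ if $x$ is even, $L(x,y) = C$ if $x \equiv 1 \pmod 4$, and $L(x,y) = T$ if $x \equiv 3 \pmod 4$. Then the number of occurrences of CAT (triples $p, p+v, p+2v$ with labels C, A, T, $v \in \{-1,0,1\}^2 \setminus \{0\}$) equals $(3/2) n^2$. -/

import Mathlib

/-! Everything factors through the reduction `ZMod n → ZMod 4`, which is a ring map since
`4 ∣ n`. A CAT at `p` in direction `v` forces `p` into a C column (`p₀ ≡ 1 mod 4`); the A then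
has to sit in an even column, so `v₀ = ±1`, and both choices put the T at `p₀ + 2v₀ ≡ 3`.
The second coordinates `p₁` and `v₁ ∈ {0, ±1}` are free, giving `n/4 · n · 2 · 3 = 3n²/2`. -/

open Finset

inductive Letter | C | A | T
deriving DecidableEq

theorem AddMonoidHom.card_fiber_mul_card_of_surjective {G H : Type*} [AddGroup G] [AddGroup H]
    [Finite G] {f : G →+ H} (hf : Function.Surjective f) (h : H) :
    Nat.card (f ⁻¹' {h}) * Nat.card H = Nat.card G := by
  rw [Nat.card_congr (f.fiberEquivKerOfSurjective hf h), ← f.ker.card_mul_index,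
    AddSubgroup.index_ker, f.range_eq_top_of_surjective hf, AddSubgroup.card_top]

namespace ZMod

theorem one_ne_neg_one_of_four_dvd {n : ℕ} (h4 : 4 ∣ n) : (1 : ZMod n) ≠ -1 := fun h =>
  absurd (by simpa only [map_one, map_neg] using congrArg (castHom h4 (ZMod 4)) h) (by decide)

variable {m n : ℕ} [NeZero n] (h : m ∣ n)

theorem val_castHom_of_dvd (x : ZMod n) : (castHom h (ZMod m) x).val = x.val % m := by
  rw [castHom_apply, cast_eq_val, val_natCast]

theorem card_castHom_fiber [NeZero m] (r : ZMod m) :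
    #{x : ZMod n | castHom h (ZMod m) x = r} = n / m := by
  have hfiber := (castHom h (ZMod m)).toAddMonoidHom.card_fiber_mul_card_of_surjective
    (castHom_surjective h) r
  rw [Nat.card_zmod, Nat.card_zmod] at hfiber
  rw [← Fintype.card_subtype, ← Nat.card_eq_fintype_card]
  exact (Nat.div_eq_of_eq_mul_left (Nat.pos_of_neZero m) hfiber.symm).symm

end ZMod

open ZMod

def stripeLetter (r : ZMod 4) : Letter :=
  if r.val % 2 = 0 then .A else if r.val = 1 then .C else .T

def catOccurrences {n : ℕ} [NeZero n] (L : (Fin 2 → ZMod n) → Letter) :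
    Finset ((Fin 2 → ZMod n) × (Fin 2 → ZMod n)) :=
  univ.filter fun p => (∀ j, p.2 j = 0 ∨ p.2 j = 1 ∨ p.2 j = -1) ∧ p.2 ≠ 0 ∧
    L p.1 = Letter.C ∧ L (p.1 + p.2) = Letter.A ∧ L (p.1 + 2 • p.2) = Letter.T

section VerticalStripes

variable {n : ℕ} (h4 : 4 ∣ n)

theorem stripeLetter_cat_iff (x s : ZMod n) (hs : s = 0 ∨ s = 1 ∨ s = -1) :
    stripeLetter (castHom h4 (ZMod 4) x) = .C ∧ stripeLetter (castHom h4 (ZMod 4) (x + s)) = .A ∧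
        stripeLetter (castHom h4 (ZMod 4) (x + 2 • s)) = .T ↔
      castHom h4 (ZMod 4) x = 1 ∧ (s = 1 ∨ s = -1) := by
  have := nontrivial_of_ne _ _ (one_ne_neg_one_of_four_dvd h4)
  rcases hs with rfl | rfl | rfl <;>
    simp only [map_add, map_nsmul, map_neg, map_one, map_zero, zero_ne_one, zero_eq_neg,
      one_ne_zero, true_or, or_true, or_self, and_true, and_false] <;>
    generalize castHom h4 (ZMod 4) x = r <;> revert r <;> decide

variable [NeZero n]

theorem stripeLetter_castHom (x : ZMod n) :
    stripeLetter (castHom h4 (ZMod 4) x) =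
      if x.val % 2 = 0 then .A else if x.val % 4 = 1 then .C else .T := by
  rw [stripeLetter, val_castHom_of_dvd, Nat.mod_mod_of_dvd _ (by norm_num : 2 ∣ 4)]

def verticalStripes (p : Fin 2 → ZMod n) : Letter :=
  stripeLetter (castHom h4 (ZMod 4) (p 0))

theorem catOccurrences_verticalStripes :
    catOccurrences (verticalStripes h4) =
      Fintype.piFinset ![({x | castHom h4 (ZMod 4) x = 1} : Finset (ZMod n)), univ] ×ˢ
        Fintype.piFinset ![{1, -1}, {0, 1, -1}] := by
  have := nontrivial_of_ne _ _ (one_ne_neg_one_of_four_dvd h4)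
  ext ⟨p, v⟩
  simp only [catOccurrences, verticalStripes, mem_filter, mem_univ, true_and, mem_product,
    Fintype.mem_piFinset, Fin.forall_fin_two, Matrix.cons_val_zero, Matrix.cons_val_one,
    mem_insert, mem_singleton, Pi.add_apply, Pi.smul_apply, and_true]
  constructor
  · rintro ⟨⟨hv0, hv1⟩, -, hcat⟩
    obtain ⟨hp, hv0⟩ := (stripeLetter_cat_iff h4 _ _ hv0).mp hcat
    exact ⟨hp, hv0, hv1⟩
  · rintro ⟨hp, hv0, hv1⟩
    refine ⟨⟨Or.inr hv0, hv1⟩, fun hv => ?_,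
      (stripeLetter_cat_iff h4 _ _ (Or.inr hv0)).mpr ⟨hp, hv0⟩⟩
    rw [hv, Pi.zero_apply] at hv0
    simp at hv0

theorem card_catOccurrences_verticalStripes :
    #(catOccurrences (verticalStripes h4)) = n / 4 * n * (2 * 3) := by
  have h10 := one_ne_neg_one_of_four_dvd h4
  have := nontrivial_of_ne _ _ h10
  rw [catOccurrences_verticalStripes, card_product, Fintype.card_piFinset,
    Fintype.card_piFinset, Fin.prod_univ_two, Fin.prod_univ_two]
  simp only [Matrix.cons_val_zero, Matrix.cons_val_one]
  rw [card_castHom_fiber, card_univ, ZMod.card, card_pair h10,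
    card_eq_three.mpr ⟨0, 1, -1, zero_ne_one, (neg_ne_zero.mpr one_ne_zero).symm, h10, rfl⟩]

end VerticalStripes

theorem stmt_12_general (n : ℕ) [NeZero n] (h4 : 4 ∣ n)
    (L : (Fin 2 → ZMod n) → Letter)
    (hL : ∀ p : Fin 2 → ZMod n,
      L p = if (p 0).val % 2 = 0 then Letter.A
            else if (p 0).val % 4 = 1 then Letter.C else Letter.T) :
    ((Finset.univ.filter
        (fun p : (Fin 2 → ZMod n) × (Fin 2 → ZMod n) =>
          (∀ j, p.2 j = 0 ∨ p.2 j = 1 ∨ p.2 j = -1) ∧ p.2 ≠ 0 ∧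
          L p.1 = Letter.C ∧ L (p.1 + p.2) = Letter.A ∧
          L (p.1 + 2 • p.2) = Letter.T)).card : ℝ)
      = 3 / 2 * n ^ 2 := by
  obtain rfl : L = verticalStripes h4 :=
    funext fun p => by rw [hL, verticalStripes, stripeLetter_castHom]
  change (#(catOccurrences (verticalStripes h4)) : ℝ) = _
  rw [card_catOccurrences_verticalStripes, Nat.cast_mul, Nat.cast_mul,
    Nat.cast_div h4 (by norm_num)]
  push_cast
  ring

theorem stmt_12 (n : ℕ) [NeZero n] (hn : 4 ≤ n) (h4 : 4 ∣ n)
    (L : (Fin 2 → ZMod n) → Letter)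
    (hL : ∀ p : Fin 2 → ZMod n,
      L p = if (p 0).val % 2 = 0 then Letter.A
            else if (p 0).val % 4 = 1 then Letter.C else Letter.T) :
    ((Finset.univ.filter
        (fun p : (Fin 2 → ZMod n) × (Fin 2 → ZMod n) =>
          (∀ j, p.2 j = 0 ∨ p.2 j = 1 ∨ p.2 j = -1) ∧ p.2 ≠ 0 ∧
          L p.1 = Letter.C ∧ L (p.1 + p.2) = Letter.A ∧
          L (p.1 + 2 • p.2) = Letter.T)).card : ℝ)
      = 3 / 2 * n ^ 2 :=
  stmt_12_general n h4 L hL
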